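/- Let a, b, a', b' ∈ [0,1]. There exist distributions P and Q on (ZMod 2)^2 with d₂P = a, d₀P = b, d₂Q = a', d₀Q = b' and d₁P = d₁Q if and only if the four CHSH inequalities hold: 0 ≤ a + b + a' − b' ≤ 2, 0 ≤ a + b − a' + b' ≤ 2, 0 ≤ a − b + a' + b' ≤ 2, and 0 ≤ −a + b + a' + b' ≤ 2. (That is, a distribution on the boundary of the diamond scenario extends to the diamond precisely when the CHSH inequalities are satisfied.) -/

import Mathlib

open Finset

/-- A distribution on `(ZMod 2)²`: nonnegative with total mass 1. -/
def IsDist2 (p : ZMod 2 → ZMod 2 → ℝ) : Prop :=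
  (∀ a b, 0 ≤ p a b) ∧ (∑ a : ZMod 2, ∑ b : ZMod 2, p a b = 1)

/-- The `d₀` edge marginal (at outcome `0`) of a distribution on a triangle. -/
def faceD0 (p : ZMod 2 → ZMod 2 → ℝ) : ℝ := p 0 0 + p 1 0

/-- The `d₁` edge marginal (at outcome `0`) of a distribution on a triangle. -/
def faceD1 (p : ZMod 2 → ZMod 2 → ℝ) : ℝ := p 0 0 + p 1 1

/-- The `d₂` edge marginal (at outcome `0`) of a distribution on a triangle. -/
def faceD2 (p : ZMod 2 → ZMod 2 → ℝ) : ℝ := p 0 0 + p 0 1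

/-!
A triangle distribution is determined by its three marginals `a = d₂`, `b = d₀`, `c = d₁`:
its entries `p₀₀, p₀₁, p₁₀, p₁₁` are
`(a + b + c - 1)/2`, `(1 + a - b - c)/2`, `(1 - a + b - c)/2`, `(1 - a - b + c)/2`.
So `(a, b)` extends by `c` exactly when `|a + b - 1| ≤ c ≤ 1 - |a - b|`, and the diamond boundary
extends iff the two intervals of admissible `d₁` values meet. Comparing the lower end of each
interval with the upper end of the other gives the CHSH inequalities; each interval is nonempty
since its marginals lie in `[0, 1]`.
-/

lemma sum_zmod_two {M : Type*} [AddCommMonoid M] (f : ZMod 2 → M) :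
    ∑ x : ZMod 2, f x = f 0 + f 1 :=
  Fin.sum_univ_two f

lemma isDist2_iff (p : ZMod 2 → ZMod 2 → ℝ) :
    IsDist2 p ↔ (0 ≤ p 0 0 ∧ 0 ≤ p 0 1 ∧ 0 ≤ p 1 0 ∧ 0 ≤ p 1 1) ∧
      p 0 0 + p 0 1 + p 1 0 + p 1 1 = 1 := by
  have zmod_two : ∀ x : ZMod 2, x = 0 ∨ x = 1 := by decide
  simp only [IsDist2, sum_zmod_two, ← add_assoc]
  refine and_congr_left fun _ => ⟨fun h => ⟨h 0 0, h 0 1, h 1 0, h 1 1⟩, ?_⟩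
  rintro ⟨h00, h01, h10, h11⟩ x y
  rcases zmod_two x with rfl | rfl <;> rcases zmod_two y with rfl | rfl <;> assumption

def faceD1Range (a b : ℝ) : Set ℝ := Set.Icc |a + b - 1| (1 - |a - b|)

lemma exists_isDist2_faces_iff (a b c : ℝ) :
    (∃ p, IsDist2 p ∧ faceD2 p = a ∧ faceD0 p = b ∧ faceD1 p = c) ↔ c ∈ faceD1Range a b := by
  simp only [faceD1Range, Set.mem_Icc, isDist2_iff, faceD0, faceD1, faceD2]
  constructor
  · rintro ⟨p, ⟨⟨h00, h01, h10, h11⟩, hsum⟩, rfl, rfl, rfl⟩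
    exact ⟨abs_le.2 ⟨by linarith, by linarith⟩, le_sub_comm.1 (abs_le.2 ⟨by linarith, by linarith⟩)⟩
  · rintro ⟨hl, hu⟩
    have := le_abs_self (a + b - 1); have := neg_abs_le (a + b - 1)
    have := le_abs_self (a - b); have := neg_abs_le (a - b)
    let p : ZMod 2 → ZMod 2 → ℝ :=
      ![![(a + b + c - 1) / 2, (1 + a - b - c) / 2], ![(1 - a + b - c) / 2, (1 - a - b + c) / 2]]
    have h00 : p 0 0 = (a + b + c - 1) / 2 := rfl
    have h01 : p 0 1 = (1 + a - b - c) / 2 := rfl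
    have h10 : p 1 0 = (1 - a + b - c) / 2 := rfl
    have h11 : p 1 1 = (1 - a - b + c) / 2 := rfl
    refine ⟨p, ⟨⟨?_, ?_, ?_, ?_⟩, ?_⟩, ?_, ?_, ?_⟩ <;> simp only [h00, h01, h10, h11] <;> linarith

lemma abs_add_sub_one_le_one_sub_abs_sub_iff (x y u v : ℝ) :
    |x + y - 1| ≤ 1 - |u - v| ↔
      (0 ≤ x + y + u - v ∧ x + y + u - v ≤ 2) ∧ (0 ≤ x + y - u + v ∧ x + y - u + v ≤ 2) := by
  rcases le_total 0 (x + y - 1) with h | h <;>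
    simp only [abs_of_nonneg, abs_of_nonpos, h] <;>
    rcases le_total 0 (u - v) with h' | h' <;>
    simp only [abs_of_nonneg, abs_of_nonpos, h'] <;>
    constructor <;> intro <;> (try refine ⟨⟨?_, ?_⟩, ?_, ?_⟩) <;> linarith

lemma abs_add_sub_one_le_one_sub_abs_sub {a b : ℝ} (ha : a ∈ Set.Icc (0 : ℝ) 1)
    (hb : b ∈ Set.Icc (0 : ℝ) 1) : |a + b - 1| ≤ 1 - |a - b| :=
  (abs_add_sub_one_le_one_sub_abs_sub_iff a b a b).2
    ⟨⟨by linarith [ha.1], by linarith [ha.2]⟩, by linarith [hb.1], by linarith [hb.2]⟩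

lemma exists_diamond_extension_iff (a b a' b' : ℝ) :
    (∃ P Q : ZMod 2 → ZMod 2 → ℝ, IsDist2 P ∧ IsDist2 Q ∧
      faceD2 P = a ∧ faceD0 P = b ∧ faceD2 Q = a' ∧ faceD0 Q = b' ∧ faceD1 P = faceD1 Q) ↔
      (faceD1Range a b ∩ faceD1Range a' b').Nonempty := by
  constructor
  · rintro ⟨P, Q, hP, hQ, hPa, hPb, hQa, hQb, hPQ⟩
    exact ⟨faceD1 P, (exists_isDist2_faces_iff a b _).1 ⟨P, hP, hPa, hPb, rfl⟩,
      (exists_isDist2_faces_iff a' b' _).1 ⟨Q, hQ, hQa, hQb, hPQ.symm⟩⟩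
  · rintro ⟨c, hc, hc'⟩
    obtain ⟨P, hP, hPa, hPb, hPc⟩ := (exists_isDist2_faces_iff a b c).2 hc
    obtain ⟨Q, hQ, hQa, hQb, hQc⟩ := (exists_isDist2_faces_iff a' b' c).2 hc'
    exact ⟨P, Q, hP, hQ, hPa, hPb, hQa, hQb, hPc.trans hQc.symm⟩

/-- **Extension to the diamond is characterized by the CHSH inequalities.**
For `a, b, a', b' ∈ [0,1]`: there exist distributions `P`, `Q` on `(ZMod 2)²` with
`d₂P = a`, `d₀P = b`, `d₂Q = a'`, `d₀Q = b'` and matching `d₁` marginals iff the four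
CHSH inequalities hold. -/
theorem diamond_extension_iff_CHSH (a b a' b' : ℝ)
    (ha : a ∈ Set.Icc (0 : ℝ) 1) (hb : b ∈ Set.Icc (0 : ℝ) 1)
    (ha' : a' ∈ Set.Icc (0 : ℝ) 1) (hb' : b' ∈ Set.Icc (0 : ℝ) 1) :
    (∃ P Q : ZMod 2 → ZMod 2 → ℝ, IsDist2 P ∧ IsDist2 Q ∧
      faceD2 P = a ∧ faceD0 P = b ∧ faceD2 Q = a' ∧ faceD0 Q = b' ∧
      faceD1 P = faceD1 Q) ↔
    ((0 ≤ a + b + a' - b' ∧ a + b + a' - b' ≤ 2) ∧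
     (0 ≤ a + b - a' + b' ∧ a + b - a' + b' ≤ 2) ∧
     (0 ≤ a - b + a' + b' ∧ a - b + a' + b' ≤ 2) ∧
     (0 ≤ -a + b + a' + b' ∧ -a + b + a' + b' ≤ 2)) := by
  rw [exists_diamond_extension_iff, faceD1Range, faceD1Range, Set.Icc_inter_Icc,
    Set.nonempty_Icc, sup_le_iff, le_inf_iff, le_inf_iff,
    abs_add_sub_one_le_one_sub_abs_sub_iff a b a' b',
    abs_add_sub_one_le_one_sub_abs_sub_iff a' b' a b]
  constructor
  · rintro ⟨⟨-, h₁, h₂⟩, ⟨h₃, h₄⟩, -⟩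
    refine ⟨h₁, h₂, ⟨?_, ?_⟩, ?_, ?_⟩ <;> linarith
  · rintro ⟨h₁, h₂, ⟨h₃, h₄⟩, h₅, h₆⟩
    refine ⟨⟨abs_add_sub_one_le_one_sub_abs_sub ha hb, h₁, h₂⟩, ⟨⟨?_, ?_⟩, ?_, ?_⟩,
      abs_add_sub_one_le_one_sub_abs_sub ha' hb'⟩ <;> linarith
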